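/- For all positive integers n ≥ k ≥ 1, the Jacobi-Stirling number of the second kind JS_n^k(z) is a polynomial in z of degree exactly n−k, and every coefficient of this polynomial is a positive integer. -/
import Mathlib


open Polynomial

/-- The Jacobi-Stirling numbers of the second kind `JS n k` as polynomials in `z`. -/
noncomputable def JS : ℕ → ℕ → Polynomial ℤ
  | 0, 0 => 1
  | 0, _ + 1 => 0
  | _ + 1, 0 => 0
  | n + 1, k + 1 => JS n k + C ((k : ℤ) + 1) * (C ((k : ℤ) + 1) + X) * JS n (k + 1)

lemma JS_eq_zero : ∀ n k : ℕ, n < k → JS n k = 0 := by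
  intro n
  induction n with
  | zero =>
    intro k hk
    cases k with
    | zero => omega
    | succ k => simp [JS]
  | succ n ih =>
    intro k hk
    cases k with
    | zero => omega
    | succ k =>
      rw [JS, ih k (by omega), ih (k+1) (by omega)]
      simp

lemma JS_expand (n k : ℕ) (i : ℕ) :
    (JS (n+1) (k+1)).coeff i =
      (JS n k).coeff i + ((k:ℤ)+1) * ((k:ℤ)+1) * (JS n (k+1)).coeff i
        + ((k:ℤ)+1) * (X * JS n (k+1)).coeff i := by
  have h : JS (n+1) (k+1) = JS n k + C (((k:ℤ)+1) * ((k:ℤ)+1)) * JS n (k+1)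
      + C ((k:ℤ)+1) * (X * JS n (k+1)) := by
    rw [JS, C_mul]
    ring
  rw [h, coeff_add, coeff_add, coeff_C_mul, coeff_C_mul]

lemma JS_coeff_nonneg : ∀ n k i : ℕ, 0 ≤ (JS n k).coeff i := by
  intro n
  induction n with
  | zero =>
    intro k i
    cases k with
    | zero => simp [JS, coeff_one]; split_ifs <;> norm_num
    | succ k => simp [JS]
  | succ n ih =>
    intro k i
    cases k with
    | zero => simp [JS]
    | succ k =>
      rw [JS_expand]
      have ha : (0:ℤ) ≤ (k:ℤ)+1 := by positivity
      have h1 := ih k i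
      have h2 := ih (k+1) i
      have h3 : 0 ≤ (X * JS n (k+1)).coeff i := by
        cases i with
        | zero => simp
        | succ j => rw [coeff_X_mul]; exact ih (k+1) j
      have := mul_nonneg (mul_nonneg ha ha) h2
      have := mul_nonneg ha h3
      linarith

lemma JS_coeff_vanish : ∀ n k i : ℕ, n - k < i → (JS n k).coeff i = 0 := by
  intro n
  induction n with
  | zero =>
    intro k i hi
    cases k with
    | zero => simp [JS, coeff_one]; omega
    | succ k => simp [JS]
  | succ n ih =>
    intro k i hi
    cases k with
    | zero => simp [JS]
    | succ k =>
      rw [JS_expand]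
      by_cases hkn : k < n
      · have h1 : (JS n k).coeff i = 0 := ih k i (by omega)
        have h2 : (JS n (k+1)).coeff i = 0 := ih (k+1) i (by omega)
        have h3 : (X * JS n (k+1)).coeff i = 0 := by
          cases i with
          | zero => simp
          | succ j => rw [coeff_X_mul]; exact ih (k+1) j (by omega)
        rw [h1, h2, h3]; ring
      · have hz : JS n (k+1) = 0 := JS_eq_zero n (k+1) (by omega)
        have h1 : (JS n k).coeff i = 0 := by
          by_cases hk : n < k
          · rw [JS_eq_zero n k hk]; simp
          · exact ih k i (by omega)
        rw [hz, h1]; simp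

lemma JS_coeff_pos : ∀ n k : ℕ, 1 ≤ k → k ≤ n → ∀ i ≤ n - k, 0 < (JS n k).coeff i := by
  intro n
  induction n with
  | zero => intro k h1 h2; omega
  | succ n ih =>
    intro k hk1 hk2 i hi
    cases k with
    | zero => omega
    | succ k =>
      rw [JS_expand]
      have ha : (0:ℤ) ≤ (k:ℤ)+1 := by positivity
      rcases Nat.eq_zero_or_pos k with h0 | hkpos
      · subst h0
        rcases Nat.eq_zero_or_pos n with hn0 | hn
        · subst hn0
          have hi0 : i = 0 := by omega
          subst hi0
          simp [JS, coeff_one]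
        · have h1 : 0 ≤ (JS n 0).coeff i := JS_coeff_nonneg n 0 i
          by_cases hii : i ≤ n - 1
          · have h2 : 0 < (JS n 1).coeff i := ih 1 le_rfl hn i hii
            have h3 : 0 ≤ (X * JS n 1).coeff i := by
              cases i with
              | zero => simp
              | succ j => rw [coeff_X_mul]; exact JS_coeff_nonneg n 1 j
            push_cast
            nlinarith
          · obtain ⟨j, rfl⟩ : ∃ j, i = j + 1 := ⟨i-1, by omega⟩
            have h2 : 0 ≤ (JS n 1).coeff (j+1) := JS_coeff_nonneg _ _ _
            have h3 : 0 < (X * JS n 1).coeff (j+1) := by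
              rw [coeff_X_mul]; exact ih 1 le_rfl hn j (by omega)
            push_cast
            nlinarith
      · have h1 : 0 < (JS n k).coeff i := ih k hkpos (by omega) i (by omega)
        have h2 : 0 ≤ (JS n (k+1)).coeff i := JS_coeff_nonneg _ _ _
        have h3 : 0 ≤ (X * JS n (k+1)).coeff i := by
          cases i with
          | zero => simp
          | succ j => rw [coeff_X_mul]; exact JS_coeff_nonneg _ _ _
        have := mul_nonneg (mul_nonneg ha ha) h2
        have := mul_nonneg ha h3
        linarith

/-- For `n ≥ k ≥ 1`, `JS n k` has degree exactly `n - k` in `z` and all its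
coefficients (up to degree `n - k`) are positive integers. -/
theorem stmt0 (n k : ℕ) (hk : 1 ≤ k) (hkn : k ≤ n) :
    (JS n k).degree = (n - k : ℕ) ∧ ∀ i ≤ n - k, 0 < (JS n k).coeff i := by
  have hpos := JS_coeff_pos n k hk hkn
  constructor
  · apply degree_eq_of_le_of_coeff_ne_zero
    · rw [degree_le_iff_coeff_zero]
      intro m hm
      apply JS_coeff_vanish
      exact_mod_cast Nat.cast_lt.mp (by exact_mod_cast hm)
    · exact (hpos (n - k) le_rfl).ne'
  · exact hpos
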